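/- The canonical map C(ℤ_p, ℤ_p) → lim_k C(ℤ_p, ℤ/p^kℤ), induced by the reduction maps ℤ_p → ℤ/p^kℤ, is an isomorphism of rings. -/

import Mathlib

/-!
The reduction `ℤ_p → ℤ/p^kℤ` has the balls of radius `p^{-k}` as fibres. Hence a map into
`ℤ_p` is continuous exactly when all its reductions are locally constant, and a compatible family
of continuous maps `ℤ_p → ℤ/p^kℤ` glues pointwise, through the universal property of `ℤ_p` as
`lim_k ℤ/p^kℤ`, to a continuous map `ℤ_p → ℤ_p`.
-/

open scoped ContinuousMap

variable (p : ℕ) [Fact p.Prime]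
  [∀ k : ℕ, TopologicalSpace (ZMod (p ^ k))] [∀ k : ℕ, DiscreteTopology (ZMod (p ^ k))]

/-- The inverse limit `lim_k C(ℤ_p, ℤ/p^kℤ)`, realized as the subring of the
product ring `Π k, C(ℤ_p, ℤ/p^kℤ)` consisting of families compatible with the
reduction maps `ℤ/p^{k+1}ℤ → ℤ/p^kℤ`. -/
noncomputable def padicLimSubring : Subring (∀ k : ℕ, C(ℤ_[p], ZMod (p ^ k))) where
  carrier := {x | ∀ (k : ℕ) (z : ℤ_[p]),
    ZMod.castHom (pow_dvd_pow p (Nat.le_succ k)) (ZMod (p ^ k)) (x (k + 1) z) = x k z}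
  zero_mem' := by
    intro k z
    simp only [Pi.zero_apply, ContinuousMap.zero_apply, map_zero]
  one_mem' := by
    intro k z
    simp only [Pi.one_apply, ContinuousMap.one_apply, map_one]
  add_mem' := by
    intro a b ha hb k z
    simp only [Pi.add_apply, ContinuousMap.add_apply, map_add, ha k z, hb k z]
  mul_mem' := by
    intro a b ha hb k z
    simp only [Pi.mul_apply, ContinuousMap.mul_apply, map_mul, ha k z, hb k z]
  neg_mem' := by
    intro a ha k z
    simp only [Pi.neg_apply, ContinuousMap.neg_apply, map_neg, ha k z]

theorem ZMod.castHom_pow_comp_of_le {R : Type*} [NonAssocSemiring R] {n : ℕ}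
    {f : ∀ k : ℕ, R →+* ZMod (n ^ k)}
    (hf : ∀ k, (ZMod.castHom (pow_dvd_pow n k.le_succ) _).comp (f (k + 1)) = f k)
    (k₁ k₂ : ℕ) (h : k₁ ≤ k₂) : (ZMod.castHom (pow_dvd_pow n h) _).comp (f k₂) = f k₁ := by
  induction k₂, h using Nat.le_induction with
  | base => rw [ZMod.castHom_self, RingHom.id_comp]
  | succ k hk ih => rw [← ih, ← hf k, ← RingHom.comp_assoc, ZMod.castHom_comp]

namespace PadicInt

variable {q : ℕ} [Fact q.Prime]

theorem toZModPow_eq_iff_dist_le (k : ℕ) (x y : ℤ_[q]) :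
    toZModPow k x = toZModPow k y ↔ dist x y ≤ (q : ℝ) ^ (-(k : ℤ)) := by
  rw [dist_eq_norm, norm_le_pow_iff_mem_span_pow, ← ker_toZModPow, RingHom.mem_ker, map_sub,
    sub_eq_zero]

theorem isLocallyConstant_toZModPow (k : ℕ) : IsLocallyConstant (toZModPow (p := q) k) := by
  have hq : (q : ℝ) ^ (-(k : ℤ)) ≠ 0 := zpow_ne_zero _ (mod_cast (Fact.out : q.Prime).ne_zero)
  refine (IsLocallyConstant.iff_exists_open _).2 fun x =>
    ⟨_, IsUltrametricDist.isOpen_closedBall x hq, Metric.mem_closedBall_self (by positivity),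
      fun y hy => (toZModPow_eq_iff_dist_le k y x).2 hy⟩

theorem continuous_of_isLocallyConstant_toZModPow_comp {X : Type*} [TopologicalSpace X]
    {g : X → ℤ_[q]} (hg : ∀ k, IsLocallyConstant (toZModPow k ∘ g)) : Continuous g := by
  refine Metric.continuous_iff'.2 fun a ε hε => ?_
  obtain ⟨k, hk⟩ := exists_pow_neg_lt q hε
  filter_upwards [(hg k).eventually_eq a] with x hx
  exact ((toZModPow_eq_iff_dist_le k _ _).1 hx).trans_lt hk

end PadicInt

namespace padicLimSubring

noncomputable def evalRingHom (z : ℤ_[p]) (k : ℕ) : padicLimSubring p →+* ZMod (p ^ k) where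
  toFun x := x.1 k z
  map_one' := rfl
  map_mul' _ _ := rfl
  map_zero' := rfl
  map_add' _ _ := rfl

theorem castHom_comp_evalRingHom (z : ℤ_[p]) (k : ℕ) :
    (ZMod.castHom (pow_dvd_pow p k.le_succ) _).comp (evalRingHom p z (k + 1)) =
      evalRingHom p z k :=
  RingHom.ext fun x => x.2 k z

noncomputable def padicEvalRingHom (z : ℤ_[p]) : padicLimSubring p →+* ℤ_[p] :=
  PadicInt.lift (ZMod.castHom_pow_comp_of_le (castHom_comp_evalRingHom p z))

theorem toZModPow_padicEvalRingHom (z : ℤ_[p]) (k : ℕ) (x : padicLimSubring p) :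
    PadicInt.toZModPow k (padicEvalRingHom p z x) = x.1 k z :=
  RingHom.congr_fun (PadicInt.lift_spec _ k) x

noncomputable def lift (x : padicLimSubring p) : C(ℤ_[p], ℤ_[p]) where
  toFun z := padicEvalRingHom p z x
  continuous_toFun := PadicInt.continuous_of_isLocallyConstant_toZModPow_comp fun k => by
    convert (IsLocallyConstant.iff_continuous (x.1 k)).2 (x.1 k).continuous using 1
    exact funext fun z => toZModPow_padicEvalRingHom p z k x

noncomputable def ofContinuousMap : C(ℤ_[p], ℤ_[p]) →+* padicLimSubring p :=
  (RingHom.pi fun k => (PadicInt.toZModPow k).compLeftContinuous ℤ_[p]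
      (PadicInt.isLocallyConstant_toZModPow k).continuous).codRestrict _
    fun f k z => PadicInt.cast_toZModPow k (k + 1) k.le_succ (f z)

theorem ofContinuousMap_bijective : Function.Bijective (ofContinuousMap p) := by
  refine ⟨fun f g hfg => ?_, fun x => ⟨lift p x, ?_⟩⟩
  · ext z
    exact PadicInt.ext_of_toZModPow.1 fun k => congrArg (fun y : padicLimSubring p => y.1 k z) hfg
  · refine Subtype.ext <| funext fun k => ContinuousMap.ext fun z => ?_
    exact toZModPow_padicEvalRingHom p z k x

end padicLimSubring

/-- The canonical map `C(ℤ_p, ℤ_p) → lim_k C(ℤ_p, ℤ/p^kℤ)` induced by the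
reductions `ℤ_p → ℤ/p^kℤ` is an isomorphism of rings. -/
theorem stmt6 :
    ∃ e : C(ℤ_[p], ℤ_[p]) ≃+* padicLimSubring p,
      ∀ (f : C(ℤ_[p], ℤ_[p])) (k : ℕ) (z : ℤ_[p]),
        (e f : ∀ k : ℕ, C(ℤ_[p], ZMod (p ^ k))) k z = PadicInt.toZModPow k (f z) :=
  ⟨RingEquiv.ofBijective _ (padicLimSubring.ofContinuousMap_bijective p), fun _ _ _ => rfl⟩
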